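/- If the Sum criterion holds at step k, i.e., α · ‖(A_{k,k}^(k))⁻¹‖₁⁻¹ ≥ Σ_{i>k} ‖A_{i,k}^(k)‖₁, then for each column j > k, Σ_{i>k} ‖A_{i,j}^(k+1)‖₁ ≤ Σ_{i>k} ‖A_{i,j}^(k)‖₁ + α ‖A_{k,j}^(k)‖₁. -/

import Mathlib

/-!
The matrix 1-norm is the `∞`-operator norm of the transpose, so it is subadditive and
submultiplicative. Each updated tile therefore satisfies
`‖A_ij - A_ik A_kk⁻¹ A_kj‖₁ ≤ ‖A_ij‖₁ + ‖A_ik‖₁ ‖A_kk⁻¹‖₁ ‖A_kj‖₁`, and after summing over `i > k`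
the Sum criterion bounds `(Σ_{i>k} ‖A_ik‖₁) ‖A_kk⁻¹‖₁` by `α`.
-/

/-- The induced matrix 1-norm (maximum absolute column sum). -/
noncomputable def norm1 {ι κ : Type*} [Fintype ι] [Fintype κ] (M : Matrix ι κ ℝ) : ℝ :=
  ⨆ j, ∑ i, |M i j|

attribute [local instance] Matrix.linftyOpNormedAddCommGroup

open Matrix

section Norm1

variable {ι κ μ ν : Type*} [Fintype ι] [Fintype κ] [Fintype μ] [Fintype ν]

theorem norm1_eq_norm_transpose (M : Matrix ι κ ℝ) : norm1 M = ‖Mᵀ‖ := by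
  simp only [linfty_opNorm_def, Finset.sup_univ_eq_ciSup, NNReal.coe_iSup, NNReal.coe_sum,
    coe_nnnorm, Real.norm_eq_abs, transpose_apply, norm1]

theorem norm1_nonneg (M : Matrix ι κ ℝ) : 0 ≤ norm1 M :=
  norm1_eq_norm_transpose M ▸ norm_nonneg _

theorem norm1_sub_le (X Y : Matrix ι κ ℝ) : norm1 (X - Y) ≤ norm1 X + norm1 Y := by
  simpa only [norm1_eq_norm_transpose, transpose_sub] using norm_sub_le Xᵀ Yᵀ

theorem norm1_mul_le (X : Matrix ι κ ℝ) (Y : Matrix κ μ ℝ) :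
    norm1 (X * Y) ≤ norm1 X * norm1 Y := by
  simpa only [norm1_eq_norm_transpose, transpose_mul, mul_comm] using linfty_opNorm_mul Yᵀ Xᵀ

theorem norm1_sub_mul_mul_le (X : Matrix ι ν ℝ) (Y : Matrix ι κ ℝ) (Z : Matrix κ μ ℝ)
    (W : Matrix μ ν ℝ) :
    norm1 (X - Y * Z * W) ≤ norm1 X + norm1 Y * norm1 Z * norm1 W :=
  calc norm1 (X - Y * Z * W) ≤ norm1 X + norm1 (Y * Z * W) := norm1_sub_le _ _
    _ ≤ norm1 X + norm1 (Y * Z) * norm1 W := by gcongr; exact norm1_mul_le _ _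
    _ ≤ norm1 X + norm1 Y * norm1 Z * norm1 W := by
        gcongr
        · exact norm1_nonneg _
        · exact norm1_mul_le _ _

end Norm1

theorem sum_criterion_one_step_general
    {n nb : ℕ} (A : Fin n → Fin n → Matrix (Fin nb) (Fin nb) ℝ)
    (k : Fin n) (α : ℝ) (hα : 0 < α)
    (hcrit : ∑ i ∈ Finset.univ.filter (fun i => k < i), norm1 (A i k)
      ≤ α * (norm1 ((A k k)⁻¹))⁻¹) :
    ∀ j, k < j →
      ∑ i ∈ Finset.univ.filter (fun i => k < i),
          norm1 (A i j - A i k * (A k k)⁻¹ * A k j)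
        ≤ (∑ i ∈ Finset.univ.filter (fun i => k < i), norm1 (A i j))
            + α * norm1 (A k j) := by
  intro j _
  set s := Finset.univ.filter (fun i => k < i)
  have hpivot : (∑ i ∈ s, norm1 (A i k)) * norm1 (A k k)⁻¹ ≤ α :=
    mul_le_of_le_mul_inv₀ hα.le (norm1_nonneg _) hcrit
  calc ∑ i ∈ s, norm1 (A i j - A i k * (A k k)⁻¹ * A k j)
      ≤ ∑ i ∈ s, (norm1 (A i j) + norm1 (A i k) * norm1 (A k k)⁻¹ * norm1 (A k j)) :=
        Finset.sum_le_sum fun i _ => norm1_sub_mul_mul_le _ _ _ _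
    _ = (∑ i ∈ s, norm1 (A i j))
          + (∑ i ∈ s, norm1 (A i k)) * norm1 (A k k)⁻¹ * norm1 (A k j) := by
        rw [Finset.sum_add_distrib, Finset.sum_mul, Finset.sum_mul]
    _ ≤ (∑ i ∈ s, norm1 (A i j)) + α * norm1 (A k j) := by
        gcongr
        exact norm1_nonneg _

/-- If the Sum criterion holds at step `k`, then for each column `j > k` the sum of tile
norms after the Schur update is bounded by the previous sum plus `α ‖A_{k,j}‖₁`. -/
theorem sum_criterion_one_step
    {n nb : ℕ} (A : Fin n → Fin n → Matrix (Fin nb) (Fin nb) ℝ)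
    (k : Fin n) (α : ℝ) (hα : 0 < α)
    (hinv : IsUnit (A k k))
    (hcrit : ∑ i ∈ Finset.univ.filter (fun i => k < i), norm1 (A i k)
      ≤ α * (norm1 ((A k k)⁻¹))⁻¹) :
    ∀ j, k < j →
      ∑ i ∈ Finset.univ.filter (fun i => k < i),
          norm1 (A i j - A i k * (A k k)⁻¹ * A k j)
        ≤ (∑ i ∈ Finset.univ.filter (fun i => k < i), norm1 (A i j))
            + α * norm1 (A k j) :=
  sum_criterion_one_step_general A k α hα hcrit
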